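/- arXiv:2112.08701 — 8 statements merged into one kernel-verified Lean document; each statement's English description precedes it below -/
import Mathlib

section
/- For N a standard Gaussian random variable and any u ∈ ℝ, r > 0, the derivative with respect to r of E[log(1 + e^{r·N_u}) - r·N_u·e^{r·N_u}/(1 + e^{r·N_u})], where N_u = u + N, equals -E[r·N_u²·e^{r·N_u}/(1 + e^{r·N_u})²], which is strictly negative. Consequently r ↦ E[ρ(r·N_u)] is strictly decreasing on (0,∞), where ρ(t) = log(1+e^t) - t e^t/(1+e^t). -/
/-!
Since `ρ'(t) = -t eᵗ/(1 + eᵗ)²`, the chain rule gives `∂ₛ ρ(s X) = -s X² e^{sX}/(1 + e^{sX})²`,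
which is bounded by `(|r| + 1) X²` for `|s - r| < 1`; so for any `X` with a finite second moment
one may differentiate under the expectation. The derivative is negative for `r > 0` as soon as
`X` is not a.e. zero, which holds for `X = u + N` because the Gaussian law has no atoms.
-/

open MeasureTheory ProbabilityTheory Real

noncomputable def logisticEntropy (t : ℝ) : ℝ :=
  log (1 + exp t) - t * exp t / (1 + exp t)

lemma continuous_logisticEntropy : Continuous logisticEntropy := by
  have h : ∀ t, 1 + exp t ≠ 0 := fun t => by positivity
  unfold logisticEntropy
  fun_prop (disch := exact h _)

lemma hasDerivAt_logisticEntropy (t : ℝ) :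
    HasDerivAt logisticEntropy (-(t * exp t / (1 + exp t) ^ 2)) t := by
  have h : 1 + exp t ≠ 0 := by positivity
  have hlog := ((hasDerivAt_exp t).const_add 1).log h
  have hquot := ((hasDerivAt_id' t).mul (hasDerivAt_exp t)).div
    ((hasDerivAt_exp t).const_add 1) h
  refine (hlog.sub hquot).congr_deriv ?_
  simp only [Pi.mul_apply]
  field_simp
  ring

lemma hasDerivAt_logisticEntropy_mul (a s : ℝ) :
    HasDerivAt (fun s => logisticEntropy (s * a))
      (-(s * a ^ 2 * exp (s * a) / (1 + exp (s * a)) ^ 2)) s := by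
  refine ((hasDerivAt_logisticEntropy (s * a)).comp s (hasDerivAt_mul_const a)).congr_deriv ?_
  ring

lemma log_one_add_exp_le (t : ℝ) : log (1 + exp t) ≤ log 2 + |t| := by
  have hle : 1 + exp t ≤ 2 * exp |t| := by
    linarith [exp_le_exp.2 (le_abs_self t), one_le_exp (abs_nonneg t)]
  calc log (1 + exp t) ≤ log (2 * exp |t|) := log_le_log (by positivity) hle
    _ = log 2 + |t| := by rw [log_mul two_ne_zero (exp_pos _).ne', log_exp]

lemma abs_logisticEntropy_le (t : ℝ) : |logisticEntropy t| ≤ log 2 + 2 * |t| := by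
  have hpos : 0 < 1 + exp t := by positivity
  have hlog : |log (1 + exp t)| ≤ log 2 + |t| := by
    rw [abs_of_nonneg (log_nonneg (by linarith [exp_pos t]))]
    exact log_one_add_exp_le t
  have hquot : |t * exp t / (1 + exp t)| ≤ |t| := by
    rw [abs_div, abs_mul, abs_of_pos hpos, abs_of_pos (exp_pos t), div_le_iff₀ hpos]
    nlinarith [exp_pos t, abs_nonneg t]
  unfold logisticEntropy
  linarith [abs_sub (log (1 + exp t)) (t * exp t / (1 + exp t))]

lemma abs_mul_sq_mul_exp_div_le (s a : ℝ) :
    |s * a ^ 2 * exp (s * a) / (1 + exp (s * a)) ^ 2| ≤ |s| * a ^ 2 := by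
  have hpos : 0 < (1 + exp (s * a)) ^ 2 := by positivity
  rw [abs_div, abs_mul, abs_mul, abs_of_pos hpos, abs_of_pos (exp_pos _), abs_sq,
    div_le_iff₀ hpos]
  have : exp (s * a) ≤ (1 + exp (s * a)) ^ 2 := by nlinarith [exp_pos (s * a)]
  exact mul_le_mul_of_nonneg_left this (by positivity)

section Expectation

variable {Ω : Type*} [MeasurableSpace Ω] {μ : Measure Ω} {X : Ω → ℝ}

lemma integrable_logisticEntropy_mul [IsFiniteMeasure μ] (hX : MemLp X 1 μ) (r : ℝ) :
    Integrable (fun ω => logisticEntropy (r * X ω)) μ := by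
  refine ((integrable_const (log 2)).add ((memLp_one_iff_integrable.1 hX).abs.const_mul
    (2 * |r|))).mono' (continuous_logisticEntropy.comp_aestronglyMeasurable
      (hX.1.const_mul r)) (Filter.Eventually.of_forall fun ω => ?_)
  calc ‖logisticEntropy (r * X ω)‖ ≤ log 2 + 2 * |r * X ω| := abs_logisticEntropy_le _
    _ = log 2 + 2 * |r| * |X ω| := by rw [abs_mul]; ring

lemma integrable_mul_sq_mul_exp_div (hX : MemLp X 2 μ) (r : ℝ) :
    Integrable (fun ω => r * X ω ^ 2 * exp (r * X ω) / (1 + exp (r * X ω)) ^ 2) μ := by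
  have hcont : Continuous fun x : ℝ => r * x ^ 2 * exp (r * x) / (1 + exp (r * x)) ^ 2 := by
    have : ∀ x : ℝ, (1 + exp (r * x)) ^ 2 ≠ 0 := fun x => by positivity
    fun_prop (disch := exact this _)
  refine (hX.integrable_sq.const_mul |r|).mono' (hcont.comp_aestronglyMeasurable hX.1)
    (Filter.Eventually.of_forall fun ω => abs_mul_sq_mul_exp_div_le r (X ω))

lemma hasDerivAt_integral_logisticEntropy_mul [IsFiniteMeasure μ] (hX : MemLp X 2 μ) (r : ℝ) :
    HasDerivAt (fun s => ∫ ω, logisticEntropy (s * X ω) ∂μ)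
      (-∫ ω, r * X ω ^ 2 * exp (r * X ω) / (1 + exp (r * X ω)) ^ 2 ∂μ) r := by
  rw [← integral_neg]
  refine (hasDerivAt_integral_of_dominated_loc_of_deriv_le
    (bound := fun ω => (|r| + 1) * X ω ^ 2) (Metric.ball_mem_nhds r one_pos)
    (Filter.Eventually.of_forall fun s =>
      continuous_logisticEntropy.comp_aestronglyMeasurable (hX.1.const_mul s))
    (integrable_logisticEntropy_mul (hX.mono_exponent one_le_two) r) ?_ ?_
    (hX.integrable_sq.const_mul _)
    (Filter.Eventually.of_forall fun ω s _ => hasDerivAt_logisticEntropy_mul (X ω) s)).2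
  · exact (integrable_mul_sq_mul_exp_div hX r).neg.aestronglyMeasurable
  · refine Filter.Eventually.of_forall fun ω s hs => ?_
    rw [Metric.mem_ball, Real.dist_eq] at hs
    rw [norm_neg, Real.norm_eq_abs]
    refine (abs_mul_sq_mul_exp_div_le s (X ω)).trans ?_
    gcongr
    linarith [abs_sub_abs_le_abs_sub s r]

lemma integral_mul_sq_mul_exp_div_pos (hX : MemLp X 2 μ) (hX0 : ¬ X =ᵐ[μ] 0)
    {r : ℝ} (hr : 0 < r) :
    0 < ∫ ω, r * X ω ^ 2 * exp (r * X ω) / (1 + exp (r * X ω)) ^ 2 ∂μ := by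
  have hsupp : Function.support (fun ω => r * X ω ^ 2 * exp (r * X ω) / (1 + exp (r * X ω)) ^ 2)
      = Function.support X := by
    ext ω
    have h : ∀ t, 1 + exp t ≠ 0 := fun t => by positivity
    simp [hr.ne', (exp_pos _).ne', h]
  rw [integral_pos_iff_support_of_nonneg (fun ω => by positivity)
    (integrable_mul_sq_mul_exp_div hX r), hsupp, pos_iff_ne_zero]
  exact hX0

lemma strictAntiOn_integral_logisticEntropy_mul [IsFiniteMeasure μ] (hX : MemLp X 2 μ)
    (hX0 : ¬ X =ᵐ[μ] 0) :
    StrictAntiOn (fun s => ∫ ω, logisticEntropy (s * X ω) ∂μ) (Set.Ioi 0) := by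
  refine strictAntiOn_of_hasDerivWithinAt_neg (convex_Ioi 0)
    (fun s _ => (hasDerivAt_integral_logisticEntropy_mul hX s).continuousAt.continuousWithinAt)
    (fun s _ => (hasDerivAt_integral_logisticEntropy_mul hX s).hasDerivWithinAt) ?_
  rw [interior_Ioi]
  exact fun s hs => neg_neg_of_pos (integral_mul_sq_mul_exp_div_pos hX hX0 hs)

end Expectation

lemma not_const_add_ae_eq_zero (μ : Measure ℝ) [NeZero μ] [NullSingletonClass μ] (u : ℝ) :
    ¬ (fun x => u + x) =ᵐ[μ] 0 := by
  intro h
  have hfalse : ∀ᵐ x ∂μ, False := (h.and (μ.ae_ne (-u))).mono fun x ⟨hx, hne⟩ =>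
    hne (eq_neg_of_add_eq_zero_right hx)
  exact NeZero.ne μ (ae_eq_bot.1 (Filter.eventually_false_iff_eq_bot.1 hfalse))

/-- For N ∼ N(0,1) and N_u = u + N, the map r ↦ E[ρ(r·N_u)] with
    ρ(t) = log(1+e^t) − t e^t/(1+e^t) has derivative
    −E[r·N_u²·e^{r N_u}/(1+e^{r N_u})²] < 0 at every r > 0, hence is strictly
    decreasing on (0,∞). -/
theorem risk_decreasing_on_rays (u : ℝ) (ρ : ℝ → ℝ)
    (hρ : ∀ t, ρ t = Real.log (1 + Real.exp t) - t * Real.exp t / (1 + Real.exp t)) :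
    (∀ r : ℝ, 0 < r →
      HasDerivAt (fun s : ℝ => ∫ x, ρ (s * (u + x)) ∂(gaussianReal 0 1))
        (-(∫ x, r * (u + x) ^ 2 * Real.exp (r * (u + x)) /
            (1 + Real.exp (r * (u + x))) ^ 2 ∂(gaussianReal 0 1))) r ∧
      (-(∫ x, r * (u + x) ^ 2 * Real.exp (r * (u + x)) /
            (1 + Real.exp (r * (u + x))) ^ 2 ∂(gaussianReal 0 1))) < 0) ∧
    StrictAntiOn (fun s : ℝ => ∫ x, ρ (s * (u + x)) ∂(gaussianReal 0 1))
      (Set.Ioi 0) := by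
  obtain rfl : ρ = logisticEntropy := funext hρ
  have hX : MemLp (fun x => u + x) 2 (gaussianReal 0 1) :=
    (memLp_const u).add (memLp_id_gaussianReal 2)
  have : NullSingletonClass (gaussianReal 0 1) := nullSingletonClass_gaussianReal one_ne_zero
  have hX0 := not_const_add_ae_eq_zero (gaussianReal 0 1) u
  exact ⟨fun r hr => ⟨hasDerivAt_integral_logisticEntropy_mul hX r,
      neg_neg_of_pos (integral_mul_sq_mul_exp_div_pos hX hX0 hr)⟩,
    strictAntiOn_integral_logisticEntropy_mul hX hX0⟩
end

section
/- Let X = εZ where ε is Rademacher (uniform on {−1,1}) independent of Z ∼ N(a, I_d), and let R(β) = E[ρ(X·β)] with ρ(t) = log(1+e^t) - t·e^t/(1+e^t). Then R(β) = R(−β) for all β ∈ ℝ^d, and for fixed ‖β‖₂ = r, R(β) is a decreasing function of |β·a|. -/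
/-!
Since `ε = ±1` almost surely and `ρ` is even, `ρ ⟪ε Z, β⟫ = ρ ⟪Z, β⟫`, and `⟪Z, β⟫` is
`N(⟪a, β⟫, ‖β‖²)`. Hence `R β = H_{‖β‖²} ⟪a, β⟫` with `H_v m = ∫ ρ ∂N(m, v)`, which is even in `m`.
Its derivative `∫ ρ' ∂N(m, v)` is nonpositive for `m ≥ 0`: `ρ'` is odd and nonpositive on
`[0, ∞)`, while for `m, x ≥ 0` the density of `N(m, v)` at `x` dominates the one at `-x`.
-/

open MeasureTheory ProbabilityTheory Real Set Filter
open scoped NNReal RealInnerProductSpace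

namespace Function

lemma Even.apply_abs {β : Type*} {f : ℝ → β} (hf : f.Even) (x : ℝ) : f |x| = f x := by
  rcases abs_choice x with hx | hx <;> rw [hx]
  exact hf x

lemma Even.apply_le_apply_of_abs_le {f : ℝ → ℝ} (hf : f.Even) (hanti : AntitoneOn f (Ici 0))
    {x y : ℝ} (h : |x| ≤ |y|) : f y ≤ f x := by
  rw [← hf.apply_abs x, ← hf.apply_abs y]
  exact hanti (abs_nonneg x) (abs_nonneg y) h

lemma Even.odd_of_hasDerivAt {f f' : ℝ → ℝ} (hf : f.Even) (hderiv : ∀ x, HasDerivAt f (f' x) x) :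
    f'.Odd := by
  intro x
  have h := (hderiv (-x)).comp x (hasDerivAt_neg x)
  rw [show f ∘ Neg.neg = f from funext hf] at h
  rw [(hderiv x).unique h]
  ring

end Function

lemma measurable_of_hasDerivAt {f f' : ℝ → ℝ} (hderiv : ∀ x, HasDerivAt f (f' x) x) :
    Measurable f' := by
  rw [show f' = deriv f from funext fun x => (hderiv x).deriv.symm]
  exact measurable_deriv f

lemma antitoneOn_Ici_zero_of_hasDerivAt {f f' : ℝ → ℝ} (hderiv : ∀ x, HasDerivAt f (f' x) x)
    (hf' : ∀ x, 0 ≤ x → f' x ≤ 0) : AntitoneOn f (Ici 0) :=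
  antitoneOn_of_hasDerivWithinAt_nonpos (convex_Ici 0)
    (fun x _ => (hderiv x).continuousAt.continuousWithinAt)
    (fun x _ => (hderiv x).hasDerivWithinAt) fun x hx => hf' x (interior_subset hx)

lemma hasDerivAt_integral_const_add {μ : Measure ℝ} [IsFiniteMeasure μ] {g g' : ℝ → ℝ} {C : ℝ}
    (hg : ∀ x, HasDerivAt g (g' x) x) (hg' : ∀ x, |g' x| ≤ C) {m : ℝ}
    (hint : Integrable (fun u => g (m + u)) μ) :
    HasDerivAt (fun m => ∫ u, g (m + u) ∂μ) (∫ u, g' (m + u) ∂μ) m := by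
  have hg_cont : Continuous g := continuous_iff_continuousAt.2 fun x => (hg x).continuousAt
  refine (hasDerivAt_integral_of_dominated_loc_of_deriv_le (F := fun x u => g (x + u))
    (F' := fun x u => g' (x + u)) (bound := fun _ => C) univ_mem
    (Eventually.of_forall fun m => (hg_cont.comp (continuous_const_add m)).aestronglyMeasurable)
    hint ((measurable_of_hasDerivAt hg).comp (measurable_const_add m)).aestronglyMeasurable
    (ae_of_all _ fun u x _ => hg' _) (integrable_const C)
    (ae_of_all _ fun u x _ => ?_)).2
  exact (hg (x + u)).comp_add_const x u

lemma integral_gaussianReal_eq_integral_const_add (g : ℝ → ℝ) (m : ℝ) (v : ℝ≥0) :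
    ∫ x, g x ∂gaussianReal m v = ∫ u, g (m + u) ∂gaussianReal 0 v := by
  calc ∫ x, g x ∂gaussianReal m v
      = ∫ x, g x ∂(gaussianReal 0 v).map (MeasurableEquiv.addLeft m) := by
        rw [MeasurableEquiv.coe_addLeft, gaussianReal_map_const_add, zero_add]
    _ = ∫ u, g (m + u) ∂gaussianReal 0 v := integral_map_equiv _ g

lemma hasDerivAt_integral_gaussianReal {g g' : ℝ → ℝ} {C : ℝ} (hg : ∀ x, HasDerivAt g (g' x) x)
    (hg' : ∀ x, |g' x| ≤ C) {m : ℝ} {v : ℝ≥0} (hint : Integrable g (gaussianReal m v)) :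
    HasDerivAt (fun m => ∫ x, g x ∂gaussianReal m v) (∫ x, g' x ∂gaussianReal m v) m := by
  rw [funext fun m => integral_gaussianReal_eq_integral_const_add g m v,
    integral_gaussianReal_eq_integral_const_add g' m v]
  refine hasDerivAt_integral_const_add hg hg' ?_
  rwa [← zero_add m, ← gaussianReal_map_const_add, ← MeasurableEquiv.coe_addLeft,
    integrable_map_equiv] at hint

lemma integral_gaussianReal_even {g : ℝ → ℝ} (hg : g.Even) (v : ℝ≥0) :
    (fun m => ∫ x, g x ∂gaussianReal m v).Even := fun m => by
  dsimp only
  rw [← gaussianReal_map_neg]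
  exact (integral_map_equiv (MeasurableEquiv.neg ℝ) g).trans (by simp [hg.eq])

lemma gaussianPDFReal_neg_le {m : ℝ} (hm : 0 ≤ m) (v : ℝ≥0) {x : ℝ} (hx : 0 ≤ x) :
    gaussianPDFReal m v (-x) ≤ gaussianPDFReal m v x := by
  simp only [gaussianPDFReal]
  gcongr _ * exp ?_
  exact div_le_div_of_nonneg_right (by nlinarith) (by positivity)

lemma integrable_gaussianPDFReal_mul {f : ℝ → ℝ} {m : ℝ} {v : ℝ≥0} (hv : v ≠ 0)
    (hint : Integrable f (gaussianReal m v)) :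
    Integrable fun x => gaussianPDFReal m v x * f x := by
  rw [gaussianReal_of_var_ne_zero _ hv, integrable_withDensity_iff (measurable_gaussianPDF m v)
    (ae_of_all _ fun _ => gaussianPDF_lt_top)] at hint
  simpa only [toReal_gaussianPDF, mul_comm] using hint

lemma integral_gaussianReal_nonpos_of_odd {f : ℝ → ℝ} (hodd : f.Odd) (hf : ∀ x, 0 ≤ x → f x ≤ 0)
    {m : ℝ} (hm : 0 ≤ m) {v : ℝ≥0} (hint : Integrable f (gaussianReal m v)) :
    ∫ x, f x ∂gaussianReal m v ≤ 0 := by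
  rcases eq_or_ne v 0 with rfl | hv
  · rw [gaussianReal_zero_var, integral_dirac]
    exact hf m hm
  rw [integral_gaussianReal_eq_integral_smul hv]
  simp only [smul_eq_mul]
  set φ := gaussianPDFReal m v
  have hφf : Integrable fun x => φ x * f x := integrable_gaussianPDFReal_mul hv hint
  have hφf_neg : Integrable fun x => φ (-x) * f x := by
    simpa [hodd.eq] using hφf.comp_neg.neg
  have hsym : ∫ x, φ x * f x = -∫ x, φ (-x) * f x := by
    rw [← integral_neg_eq_self, ← integral_neg]
    simp [hodd.eq]
  have hpt : ∀ x, (φ x - φ (-x)) * f x ≤ 0 := fun x => by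
    rcases le_total 0 x with hx | hx
    · exact mul_nonpos_of_nonneg_of_nonpos (sub_nonneg.2 (gaussianPDFReal_neg_le hm v hx)) (hf x hx)
    · have hφ := gaussianPDFReal_neg_le hm v (neg_nonneg.2 hx)
      have hfx := hf (-x) (neg_nonneg.2 hx)
      rw [neg_neg] at hφ
      rw [hodd.eq] at hfx
      nlinarith
  have htwice : 2 * ∫ x, φ x * f x = ∫ x, (φ x - φ (-x)) * f x := by
    simp_rw [sub_mul]
    rw [integral_sub hφf hφf_neg]
    linarith
  linarith [integral_nonpos (μ := volume) hpt]

lemma antitoneOn_integral_gaussianReal {g g' : ℝ → ℝ} {C : ℝ} (heven : g.Even)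
    (hg : ∀ x, HasDerivAt g (g' x) x) (hg' : ∀ x, |g' x| ≤ C) (hg'_nonpos : ∀ x, 0 ≤ x → g' x ≤ 0)
    {v : ℝ≥0} (hint : ∀ m, Integrable g (gaussianReal m v)) :
    AntitoneOn (fun m => ∫ x, g x ∂gaussianReal m v) (Ici 0) := by
  refine antitoneOn_Ici_zero_of_hasDerivAt
    (fun m => hasDerivAt_integral_gaussianReal hg hg' (hint m))
    fun m hm => integral_gaussianReal_nonpos_of_odd (heven.odd_of_hasDerivAt hg) hg'_nonpos hm ?_
  exact .of_bound (measurable_of_hasDerivAt hg).aestronglyMeasurable C (ae_of_all _ hg')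

noncomputable def logitEntropy (t : ℝ) : ℝ := log (1 + exp t) - t * exp t / (1 + exp t)

noncomputable def logitEntropyDeriv (t : ℝ) : ℝ := -(t * exp t / (1 + exp t) ^ 2)

lemma logitEntropy_even : logitEntropy.Even := by
  intro t
  have h := exp_ne_zero t
  rw [logitEntropy, logitEntropy, exp_neg,
    show 1 + (exp t)⁻¹ = (1 + exp t) / exp t by field_simp; ring,
    log_div (by positivity) h, log_exp]
  field_simp
  ring

lemma hasDerivAt_logitEntropy (t : ℝ) : HasDerivAt logitEntropy (logitEntropyDeriv t) t := by
  have hpos : 0 < 1 + exp t := by positivity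
  have hden := (hasDerivAt_exp t).const_add 1
  have h := (hden.log hpos.ne').sub (((hasDerivAt_id t).mul (hasDerivAt_exp t)).div hden hpos.ne')
  refine h.congr_deriv ?_
  simp only [logitEntropyDeriv, id, Pi.mul_apply]
  field_simp
  ring

lemma logitEntropyDeriv_nonpos {t : ℝ} (ht : 0 ≤ t) : logitEntropyDeriv t ≤ 0 := by
  rw [logitEntropyDeriv, neg_nonpos]
  positivity

lemma abs_logitEntropyDeriv_le_one (t : ℝ) : |logitEntropyDeriv t| ≤ 1 := by
  have hden : 0 < (1 + exp t) ^ 2 := by positivity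
  rw [logitEntropyDeriv, abs_neg, abs_div, abs_mul, abs_of_pos (exp_pos t), abs_of_pos hden,
    div_le_one hden]
  rcases le_or_gt 0 t with ht | ht
  · rw [abs_of_nonneg ht]
    nlinarith [exp_pos t, add_one_le_exp t]
  · have h1 : -t ≤ exp (-t) := by linarith [add_one_le_exp (-t)]
    have h2 : exp (-t) * exp t = 1 := by rw [← exp_add]; simp
    rw [abs_of_neg ht]
    nlinarith [exp_pos t, exp_pos (-t)]

lemma antitoneOn_logitEntropy : AntitoneOn logitEntropy (Ici 0) :=
  antitoneOn_Ici_zero_of_hasDerivAt hasDerivAt_logitEntropy fun _ => logitEntropyDeriv_nonpos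

-- `logitEntropy t` is the entropy of a Bernoulli variable with logit `t`.
lemma abs_logitEntropy_le (t : ℝ) : |logitEntropy t| ≤ log 2 := by
  have hnonneg : ∀ s, 0 ≤ s → 0 ≤ logitEntropy s := fun s hs => by
    have h1 : s ≤ log (1 + exp s) := by
      rw [le_log_iff_exp_le (by positivity)]; linarith [exp_pos s]
    have h2 : s * exp s / (1 + exp s) ≤ s := by
      rw [div_le_iff₀ (by positivity)]; nlinarith [exp_pos s]
    rw [logitEntropy]; linarith
  rw [abs_of_nonneg (logitEntropy_even.apply_abs t ▸ hnonneg _ (abs_nonneg t))]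
  calc logitEntropy t ≤ logitEntropy 0 :=
        logitEntropy_even.apply_le_apply_of_abs_le antitoneOn_logitEntropy (by simp)
    _ = log 2 := by norm_num [logitEntropy]

lemma measurable_logitEntropy : Measurable logitEntropy := by
  unfold logitEntropy; fun_prop

lemma integrable_logitEntropy (μ : Measure ℝ) [IsFiniteMeasure μ] : Integrable logitEntropy μ :=
  .of_bound measurable_logitEntropy.aestronglyMeasurable (log 2) (ae_of_all _ abs_logitEntropy_le)

lemma antitoneOn_integral_logitEntropy_gaussianReal (v : ℝ≥0) :
    AntitoneOn (fun m => ∫ x, logitEntropy x ∂gaussianReal m v) (Ici 0) :=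
  antitoneOn_integral_gaussianReal logitEntropy_even hasDerivAt_logitEntropy
    abs_logitEntropyDeriv_le_one (fun _ => logitEntropyDeriv_nonpos)
    fun _ => integrable_logitEntropy _

section

variable {E : Type*} [NormedAddCommGroup E] [InnerProductSpace ℝ E] [FiniteDimensional ℝ E]
  [MeasurableSpace E] [BorelSpace E]

lemma map_inner_stdGaussian (β : E) :
    (stdGaussian E).map (fun z => ⟪z, β⟫) = gaussianReal 0 (‖β‖ ^ 2).toNNReal := by
  have h := IsGaussian.map_eq_gaussianReal (μ := stdGaussian E) (innerSL ℝ β)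
  rw [integral_strongDual_stdGaussian, variance_dual_stdGaussian, innerSL_apply_norm] at h
  convert h using 2
  ext z
  simp [real_inner_comm]

lemma map_inner_add_stdGaussian (a β : E) :
    ((stdGaussian E).map (a + ·)).map (fun z => ⟪z, β⟫)
      = gaussianReal ⟪a, β⟫ (‖β‖ ^ 2).toNNReal := by
  have hcomp : (fun z => ⟪z, β⟫) ∘ (a + ·) = (⟪a, β⟫ + ·) ∘ (fun z => ⟪z, β⟫) := by
    ext z; simp [inner_add_left]
  rw [Measure.map_map (by fun_prop) (by fun_prop), hcomp,
    ← Measure.map_map (by fun_prop) (by fun_prop), map_inner_stdGaussian,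
    gaussianReal_map_const_add, zero_add]

variable {Ω : Type*} [MeasurableSpace Ω] {P : Measure Ω}

lemma ae_eq_one_or_neg_one_of_map_eq {ε : Ω → ℝ} (hε : Measurable ε)
    (hlaw : P.map ε = (2 : ENNReal)⁻¹ • Measure.dirac 1 + (2 : ENNReal)⁻¹ • Measure.dirac (-1)) :
    ∀ᵐ ω ∂P, ε ω = 1 ∨ ε ω = -1 := by
  refine ae_of_ae_map (p := fun x => x = 1 ∨ x = -1) hε.aemeasurable ?_
  rw [hlaw, ae_add_measure_iff]
  exact ⟨Measure.ae_smul_measure (by simp [ae_dirac_eq]) _,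
    Measure.ae_smul_measure (by simp [ae_dirac_eq]) _⟩

lemma integral_comp_inner_smul_eq_integral_gaussianReal {g : ℝ → ℝ} (hg : g.Even)
    (hg_meas : Measurable g) {ε : Ω → ℝ} {Z : Ω → E} {a : E}
    (hε : ∀ᵐ ω ∂P, ε ω = 1 ∨ ε ω = -1) (hZ : Measurable Z)
    (hZlaw : P.map Z = (stdGaussian E).map (a + ·)) (β : E) :
    ∫ ω, g ⟪ε ω • Z ω, β⟫ ∂P = ∫ x, g x ∂gaussianReal ⟪a, β⟫ (‖β‖ ^ 2).toNNReal := by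
  calc ∫ ω, g ⟪ε ω • Z ω, β⟫ ∂P = ∫ ω, g ⟪Z ω, β⟫ ∂P := by
        refine integral_congr_ae ?_
        filter_upwards [hε] with ω hω
        rcases hω with h | h <;> simp [h, hg.eq]
    _ = ∫ x, g x ∂(P.map Z).map (fun z => ⟪z, β⟫) := by
        rw [Measure.map_map (by fun_prop) hZ,
          integral_map (by fun_prop) hg_meas.aestronglyMeasurable]
        rfl
    _ = _ := by rw [hZlaw, map_inner_add_stdGaussian]

end

theorem risk_symmetric_and_decreasing_in_inner_general
    {d : ℕ} (a : EuclideanSpace ℝ (Fin d))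
    {Ω : Type*} [MeasurableSpace Ω] (P : Measure Ω)
    (ε : Ω → ℝ) (Z : Ω → EuclideanSpace ℝ (Fin d))
    (hε : Measurable ε) (hZ : Measurable Z)
    (hεlaw : P.map ε = ((2 : ENNReal)⁻¹) • Measure.dirac (1 : ℝ)
        + ((2 : ENNReal)⁻¹) • Measure.dirac (-1 : ℝ))
    (hZlaw : P.map Z
        = ((Measure.pi fun _ : Fin d => gaussianReal 0 1).map (WithLp.toLp 2)).map
            (fun z : EuclideanSpace ℝ (Fin d) => a + z))
    (ρ : ℝ → ℝ)
    (hρ : ∀ t, ρ t = Real.log (1 + Real.exp t) - t * Real.exp t / (1 + Real.exp t))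
    (Risk : EuclideanSpace ℝ (Fin d) → ℝ)
    (hRisk : ∀ β, Risk β = ∫ ω, ρ (inner ℝ (ε ω • Z ω) β : ℝ) ∂P) :
    (∀ β, Risk β = Risk (-β)) ∧
    (∀ r : ℝ, ∀ β₁ β₂ : EuclideanSpace ℝ (Fin d), ‖β₁‖ = r → ‖β₂‖ = r →
      |(inner ℝ β₁ a : ℝ)| ≤ |(inner ℝ β₂ a : ℝ)| → Risk β₂ ≤ Risk β₁) := by
  obtain rfl : ρ = logitEntropy := funext hρ
  rw [map_pi_eq_stdGaussian] at hZlaw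
  set H := fun (v : ℝ≥0) (m : ℝ) => ∫ x, logitEntropy x ∂gaussianReal m v
  have hRiskH : ∀ β, Risk β = H (‖β‖ ^ 2).toNNReal ⟪β, a⟫ := fun β => by
    rw [hRisk, integral_comp_inner_smul_eq_integral_gaussianReal logitEntropy_even
      measurable_logitEntropy (ae_eq_one_or_neg_one_of_map_eq hε hεlaw) hZ hZlaw, real_inner_comm]
  have hH_even : ∀ v, (H v).Even := fun v => integral_gaussianReal_even logitEntropy_even v
  refine ⟨fun β => by rw [hRiskH, hRiskH, norm_neg, inner_neg_left, hH_even], ?_⟩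
  rintro r β₁ β₂ rfl hβ₂ hle
  rw [hRiskH, hRiskH, hβ₂]
  exact (hH_even _).apply_le_apply_of_abs_le (antitoneOn_integral_logitEntropy_gaussianReal _) hle

/-- Symmetry and monotonicity of the logistic entropy risk for the two-component
    isotropic Gaussian mixture X = εZ, Z ∼ N(a, I_d), ε Rademacher independent of Z:
    R(β) = R(−β), and on a sphere ‖β‖ = r the risk is decreasing in |β·a|. -/
theorem risk_symmetric_and_decreasing_in_inner
    {d : ℕ} (a : EuclideanSpace ℝ (Fin d))
    {Ω : Type*} [MeasurableSpace Ω] (P : Measure Ω) [IsProbabilityMeasure P]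
    (ε : Ω → ℝ) (Z : Ω → EuclideanSpace ℝ (Fin d))
    (hε : Measurable ε) (hZ : Measurable Z)
    (hindep : IndepFun ε Z P)
    (hεlaw : P.map ε = ((2 : ENNReal)⁻¹) • Measure.dirac (1 : ℝ)
        + ((2 : ENNReal)⁻¹) • Measure.dirac (-1 : ℝ))
    (hZlaw : P.map Z
        = ((Measure.pi fun _ : Fin d => gaussianReal 0 1).map (WithLp.toLp 2)).map
            (fun z : EuclideanSpace ℝ (Fin d) => a + z))
    (ρ : ℝ → ℝ)
    (hρ : ∀ t, ρ t = Real.log (1 + Real.exp t) - t * Real.exp t / (1 + Real.exp t))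
    (Risk : EuclideanSpace ℝ (Fin d) → ℝ)
    (hRisk : ∀ β, Risk β = ∫ ω, ρ (inner ℝ (ε ω • Z ω) β : ℝ) ∂P) :
    (∀ β, Risk β = Risk (-β)) ∧
    (∀ r : ℝ, ∀ β₁ β₂ : EuclideanSpace ℝ (Fin d), ‖β₁‖ = r → ‖β₂‖ = r →
      |(inner ℝ β₁ a : ℝ)| ≤ |(inner ℝ β₂ a : ℝ)| → Risk β₂ ≤ Risk β₁) :=
  risk_symmetric_and_decreasing_in_inner_general a P ε Z hε hZ hεlaw hZlaw ρ hρ Risk hRisk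
end

section
/- The function α(x) = -(e^x/(1+e^x)²)·(1 + x·(1-e^x)/(1+e^x)) is even, satisfies α(0) = -1/4, |α(x)| ≤ 1/4 on [-x₁, x₁], α(x) < 0 on (-x₁, x₁) and α(x) > 0 for |x| > x₁, where x₁ is the unique positive zero of 1 + e^x - x·e^x + x. -/
open Real

/-- Properties of α(x) = −(e^x/(1+e^x)²)(1 + x(1−e^x)/(1+e^x)): it is even,
    α(0) = −1/4, |α| ≤ 1/4 on [−x₁, x₁], α < 0 on (−x₁, x₁) and α > 0 for |x| > x₁,
    where x₁ is the unique positive zero of 1 + e^x − x e^x + x. -/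
theorem properties_of_alpha
    (α : ℝ → ℝ)
    (hα : ∀ x, α x = -(Real.exp x / (1 + Real.exp x) ^ 2) *
        (1 + x * (1 - Real.exp x) / (1 + Real.exp x)))
    (x₁ : ℝ) (hx₁pos : 0 < x₁)
    (hx₁zero : 1 + Real.exp x₁ - x₁ * Real.exp x₁ + x₁ = 0)
    (hx₁uniq : ∀ y : ℝ, 0 < y → 1 + Real.exp y - y * Real.exp y + y = 0 → y = x₁) :
    (∀ x, α (-x) = α x) ∧
    α 0 = -(1 / 4) ∧
    (∀ x ∈ Set.Icc (-x₁) x₁, |α x| ≤ 1 / 4) ∧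
    (∀ x ∈ Set.Ioo (-x₁) x₁, α x < 0) ∧
    (∀ x : ℝ, x₁ < |x| → 0 < α x) := by
  have hEpos : ∀ x : ℝ, (0:ℝ) < 1 + Real.exp x := fun x => by positivity
  set f : ℝ → ℝ := fun x => 1 + Real.exp x - x * Real.exp x + x with hf
  have hαf : ∀ x, α x = -(Real.exp x / (1 + Real.exp x) ^ 3) * f x := by
    intro x
    rw [hα]
    have h := (hEpos x).ne'
    simp only [hf]
    field_simp
    ring
  have hfcont : Continuous f := by
    simp only [hf]
    fun_prop
  have heven : ∀ x, α (-x) = α x := by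
    intro x
    rw [hαf, hαf]
    have h1 := (Real.exp_pos x).ne'
    have h2 := (hEpos x).ne'
    simp only [hf, Real.exp_neg]
    have h3 : (0:ℝ) < 1 + (Real.exp x)⁻¹ := by positivity
    field_simp
    ring
  have hα0 : α 0 = -(1/4) := by
    rw [hα]
    simp [Real.exp_zero]
    norm_num
  have hf0 : f 0 = 2 := by simp [hf]; norm_num
  have hfx₁ : f x₁ = 0 := hx₁zero
  -- f > 0 on [0, x₁)
  have hfpos : ∀ x, 0 ≤ x → x < x₁ → 0 < f x := by
    intro x hx0 hxlt
    by_contra h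
    push_neg at h
    rcases h.lt_or_eq with hlt | heq
    · have hx0' : 0 < x := by
        rcases hx0.lt_or_eq with h' | h'
        · exact h'
        · exfalso; rw [← h', hf0] at hlt; linarith
      have h0mem : (0:ℝ) ∈ Set.Ioo (f x) (f 0) := by
        rw [hf0]; exact ⟨hlt, by norm_num⟩
      obtain ⟨c, hc, hfc⟩ := intermediate_value_Ioo' hx0'.le hfcont.continuousOn h0mem
      have hcx : c = x₁ := hx₁uniq c hc.1 (by simpa [hf] using hfc)
      have := hc.2
      linarith
    · have : x = x₁ := hx₁uniq x (by
        rcases hx0.lt_or_eq with h' | h'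
        · exact h'
        · exfalso; rw [← h', hf0] at heq; linarith) (by simpa [hf] using heq)
      linarith
  -- f < 0 for x > x₁
  have hfneg : ∀ x, x₁ < x → f x < 0 := by
    intro x hx
    by_contra h
    push_neg at h
    rcases h.lt_or_eq with hlt | heq
    · set b := max x 2 + 1 with hb
      have hbx : x < b := lt_of_le_of_lt (le_max_left x 2) (by linarith)
      have hb2 : 3 ≤ b := by have := le_max_right x 2; simp only [hb]; linarith
      have he : b + 1 ≤ Real.exp b := Real.add_one_le_exp b
      have hfb : f b < 0 := by
        simp only [hf]
        nlinarith [mul_le_mul_of_nonneg_left he (by linarith : (0:ℝ) ≤ b - 1)]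
      obtain ⟨c, hc, hfc⟩ := intermediate_value_Ioo' hbx.le hfcont.continuousOn ⟨hfb, hlt⟩
      have hcx : c = x₁ := hx₁uniq c (by linarith [hc.1, hx₁pos]) (by simpa [hf] using hfc)
      have := hc.1
      linarith
    · have : x = x₁ := hx₁uniq x (by linarith) (by simpa [hf] using heq.symm)
      linarith
  -- lower bound: α x ≥ -1/4 for x ≥ 0
  have hlow : ∀ x, 0 ≤ x → -(1/4 : ℝ) ≤ α x := by
    intro x hx
    rw [hαf]
    set t := Real.exp x with ht
    have ht1 : 1 ≤ t := Real.one_le_exp hx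
    have htp : (0:ℝ) < 1 + t := by linarith
    have hnum : 0 ≤ (1 + t)^3 - 4 * t * f x := by
      simp only [hf, ← ht]
      nlinarith [mul_nonneg htp.le (sq_nonneg (t - 1)),
        mul_nonneg (mul_nonneg hx (by linarith : (0:ℝ) ≤ t - 1)) (by linarith : (0:ℝ) ≤ t)]
    have hkey : -(t / (1 + t)^3) * f x + 1/4 = ((1 + t)^3 - 4 * t * f x) / (4 * (1 + t)^3) := by
      field_simp
      ring
    have hpos : 0 ≤ ((1 + t)^3 - 4 * t * f x) / (4 * (1 + t)^3) :=
      div_nonneg hnum (by positivity)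
    linarith [hkey ▸ hpos]
  -- helper: α x < 0 on [0, x₁)
  have hneg0 : ∀ x, 0 ≤ x → x < x₁ → α x < 0 := by
    intro x hx0 hxlt
    rw [hαf]
    have := mul_pos (div_pos (Real.exp_pos x) (pow_pos (hEpos x) 3)) (hfpos x hx0 hxlt)
    linarith [this]
  -- helper: α x > 0 for x > x₁
  have hpos1 : ∀ x, x₁ < x → 0 < α x := by
    intro x hx
    rw [hαf]
    have h1 : 0 < Real.exp x / (1 + Real.exp x)^3 :=
      div_pos (Real.exp_pos x) (pow_pos (hEpos x) 3)
    have h2 := hfneg x hx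
    nlinarith [mul_pos h1 (neg_pos.mpr h2)]
  -- helper: |α x| ≤ 1/4 for x ∈ [0, x₁]
  have habs : ∀ x, 0 ≤ x → x ≤ x₁ → |α x| ≤ 1/4 := by
    intro x hx0 hxle
    have hup : α x ≤ 0 := by
      rcases hxle.lt_or_eq with h | h
      · exact (hneg0 x hx0 h).le
      · rw [hαf, h, hfx₁, mul_zero]
    rw [abs_le]
    exact ⟨hlow x hx0, by linarith⟩
  refine ⟨heven, hα0, ?_, ?_, ?_⟩
  · intro x ⟨h1, h2⟩
    rcases le_or_gt 0 x with hx0 | hx0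
    · exact habs x hx0 h2
    · rw [← heven x]
      exact habs (-x) (by linarith) (by linarith)
  · intro x ⟨h1, h2⟩
    rcases le_or_gt 0 x with hx0 | hx0
    · exact hneg0 x hx0 h2
    · rw [← heven x]
      exact hneg0 (-x) (by linarith) (by linarith)
  · intro x hx
    rcases le_or_gt 0 x with hx0 | hx0
    · rw [abs_of_nonneg hx0] at hx
      exact hpos1 x hx
    · rw [abs_of_neg hx0] at hx
      rw [← heven x]
      exact hpos1 (-x) hx
end

section
/- For all real x, the derivative of α(x) = -(e^x/(1+e^x)²)·(1 + x·(1-e^x)/(1+e^x)) satisfies |α'(x)| ≤ 2·e^{-|x|}·(|x|+1). -/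
open Real

/-- Bound on the derivative of α: for all x, |α'(x)| ≤ 2 e^{-|x|}(|x| + 1). -/
theorem alpha_deriv_bound
    (α : ℝ → ℝ)
    (hα : ∀ x, α x = -(Real.exp x / (1 + Real.exp x) ^ 2) *
        (1 + x * (1 - Real.exp x) / (1 + Real.exp x))) :
    ∀ x : ℝ, |deriv α x| ≤ 2 * Real.exp (-|x|) * (|x| + 1) := by
  have hfun : α = fun x => -(Real.exp x / (1 + Real.exp x) ^ 2) *
      (1 + x * (1 - Real.exp x) / (1 + Real.exp x)) := funext hα
  subst hfun
  intro x
  set u := Real.exp x with hu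
  have hupos : 0 < u := Real.exp_pos x
  have hden : (1 : ℝ) + u ≠ 0 := by positivity
  have hexp : HasDerivAt Real.exp u x := Real.hasDerivAt_exp x
  have h1e : HasDerivAt (fun y => 1 + Real.exp y) u x := hexp.const_add 1
  have hsq : HasDerivAt (fun y => (1 + Real.exp y) ^ 2)
      ((2 : ℕ) * (1 + u) ^ (2 - 1) * u) x := h1e.pow 2
  have hfrac : HasDerivAt (fun y => Real.exp y / (1 + Real.exp y) ^ 2)
      ((u * (1 + u) ^ 2 - u * ((2 : ℕ) * (1 + u) ^ (2 - 1) * u)) / ((1 + u) ^ 2) ^ 2) x :=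
    hexp.div hsq (by positivity)
  have hlin : HasDerivAt (fun y => y * (1 - Real.exp y))
      (1 * (1 - u) + x * (-u)) x := (hasDerivAt_id x).mul (hexp.const_sub 1)
  have hfrac2 : HasDerivAt (fun y => y * (1 - Real.exp y) / (1 + Real.exp y))
      (((1 * (1 - u) + x * (-u)) * (1 + u) - x * (1 - u) * u) / (1 + u) ^ 2) x :=
    hlin.div h1e hden
  have hsecond : HasDerivAt (fun y => 1 + y * (1 - Real.exp y) / (1 + Real.exp y))
      (((1 * (1 - u) + x * (-u)) * (1 + u) - x * (1 - u) * u) / (1 + u) ^ 2) x :=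
    hfrac2.const_add 1
  have hmain : HasDerivAt (fun y => -(Real.exp y / (1 + Real.exp y) ^ 2) *
      (1 + y * (1 - Real.exp y) / (1 + Real.exp y)))
      ((-((u * (1 + u) ^ 2 - u * ((2 : ℕ) * (1 + u) ^ (2 - 1) * u)) / ((1 + u) ^ 2) ^ 2)) *
        (1 + x * (1 - u) / (1 + u)) +
       (-(u / (1 + u) ^ 2)) *
        ((((1 * (1 - u) + x * (-u)) * (1 + u) - x * (1 - u) * u) / (1 + u) ^ 2))) x :=
    hfrac.neg.mul hsecond
  rw [hmain.deriv]
  have hDval : (-((u * (1 + u) ^ 2 - u * ((2 : ℕ) * (1 + u) ^ (2 - 1) * u)) / ((1 + u) ^ 2) ^ 2)) *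
        (1 + x * (1 - u) / (1 + u)) +
       (-(u / (1 + u) ^ 2)) *
        ((((1 * (1 - u) + x * (-u)) * (1 + u) - x * (1 - u) * u) / (1 + u) ^ 2))
      = (2 * u * (u - 1) * (1 + u) - x * u * (1 - 4 * u + u ^ 2)) / (1 + u) ^ 4 := by
    field_simp
    ring
  rw [hDval]
  set N := 2 * u * (u - 1) * (1 + u) - x * u * (1 - 4 * u + u ^ 2) with hN
  have h4pos : (0 : ℝ) < (1 + u) ^ 4 := by positivity
  rw [abs_div, abs_of_pos h4pos, div_le_iff₀ h4pos]
  rcases le_or_gt 0 x with hx | hx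
  · -- x ≥ 0, u ≥ 1
    have hu1 : 1 ≤ u := by rw [hu]; exact Real.one_le_exp hx
    have hprod : Real.exp (-x) * u = 1 := by
      rw [hu, ← Real.exp_add]; simp
    rw [abs_of_nonneg hx]
    have h5 : u * |N| ≤ 2 * (x + 1) * (1 + u) ^ 4 := by
      rcases abs_cases N with ⟨h, _⟩ | ⟨h, _⟩ <;> rw [h] <;> rw [hN] <;>
        nlinarith [sq_nonneg (u - 1), sq_nonneg u, sq_nonneg (1 + u), mul_nonneg hx (sq_nonneg (1 + u)),
          mul_nonneg hx hupos.le, sq_nonneg (u * (u - 1)), mul_nonneg (mul_nonneg hx hupos.le) hupos.le]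
    calc |N| = Real.exp (-x) * (u * |N|) := by rw [← mul_assoc, hprod, one_mul]
      _ ≤ Real.exp (-x) * (2 * (x + 1) * (1 + u) ^ 4) :=
          mul_le_mul_of_nonneg_left h5 (Real.exp_pos _).le
      _ = 2 * Real.exp (-x) * (x + 1) * (1 + u) ^ 4 := by ring
  · -- x < 0, u ≤ 1
    have hu1 : u ≤ 1 := by rw [hu]; exact Real.exp_le_one_iff.mpr hx.le
    have habs : |x| = -x := abs_of_neg hx
    rw [habs]
    have hexpx : Real.exp (- -x) = u := by rw [hu]; norm_num
    rw [hexpx]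
    have h5 : |N| ≤ 2 * u * (-x + 1) * (1 + u) ^ 4 := by
      rcases abs_cases N with ⟨h, _⟩ | ⟨h, _⟩ <;> rw [h] <;> rw [hN] <;>
        nlinarith [sq_nonneg (1 - u), sq_nonneg u, sq_nonneg (1 + u),
          mul_nonneg (neg_nonneg.mpr hx.le) hupos.le, hupos.le,
          mul_nonneg (mul_nonneg (neg_nonneg.mpr hx.le) hupos.le) (sq_nonneg (1 + u)),
          mul_nonneg hupos.le (sq_nonneg (1 + u))]
    linarith [h5]
end

section
/- For every x ≥ x₁ (where x₁ ≈ 1.5434 is the unique positive zero of 1 + e^x - x·e^x + x), the function α(x) = -(e^x/(1+e^x)²)·(1 + x·(1-e^x)/(1+e^x)) satisfies α(x) ≥ (x - x₁ - 0.08)·e^{-x}. -/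
open Real

lemma exp054_bounds : Real.exp 0.54 ≤ 1.7165 ∧ (1.7076:ℝ) ≤ Real.exp 0.54 := by
  have habs : |(0.54:ℝ)| = 0.54 := abs_of_nonneg (by norm_num)
  have h := Real.exp_bound (x := 0.54) (by rw [habs]; norm_num) (n := 4) (by norm_num)
  rw [habs] at h
  have h1 := (abs_sub_le_iff.1 h).1
  have h2 := (abs_sub_le_iff.1 h).2
  simp [Finset.sum_range_succ, Nat.factorial] at h1 h2
  norm_num at h1 h2
  constructor <;> linarith

lemma exp055_lb : (1.7242:ℝ) ≤ Real.exp 0.55 := by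
  have habs : |(0.55:ℝ)| = 0.55 := abs_of_nonneg (by norm_num)
  have h := Real.exp_bound (x := 0.55) (by rw [habs]; norm_num) (n := 4) (by norm_num)
  rw [habs] at h
  have h2 := (abs_sub_le_iff.1 h).2
  simp [Finset.sum_range_succ, Nat.factorial] at h2
  norm_num at h2
  linarith

lemma exp154_ub : Real.exp 1.54 ≤ 4.67 := by
  have h : (1.54:ℝ) = 1 + 0.54 := by norm_num
  rw [h, Real.exp_add]
  have h1 := Real.exp_one_lt_d9
  have h2 := exp054_bounds.1
  nlinarith [Real.exp_pos (0.54:ℝ), Real.exp_pos (1:ℝ)]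

lemma exp154_lb : (4.64:ℝ) ≤ Real.exp 1.54 := by
  have h : (1.54:ℝ) = 1 + 0.54 := by norm_num
  rw [h, Real.exp_add]
  have h1 := Real.exp_one_gt_d9
  have h2 := exp054_bounds.2
  nlinarith [Real.exp_pos (0.54:ℝ), Real.exp_pos (1:ℝ)]

lemma exp155_lb : (4.68:ℝ) ≤ Real.exp 1.55 := by
  have h : (1.55:ℝ) = 1 + 0.55 := by norm_num
  rw [h, Real.exp_add]
  have h1 := Real.exp_one_gt_d9
  have h2 := exp055_lb
  nlinarith [Real.exp_pos (0.55:ℝ), Real.exp_pos (1:ℝ)]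

lemma exp204_lb : (7.684:ℝ) ≤ Real.exp 2.04 := by
  have h : (2.04:ℝ) = 1 + 1 + 0.04 := by norm_num
  rw [h, Real.exp_add, Real.exp_add]
  have h1 := Real.exp_one_gt_d9
  have h2 : (1.04:ℝ) ≤ Real.exp 0.04 := by
    have := Real.add_one_le_exp (0.04:ℝ); linarith
  nlinarith [Real.exp_pos (0.04:ℝ), Real.exp_pos (1:ℝ)]

/-- The core polynomial inequality, with `E` playing the role of `e^x`. -/
lemma core_ineq (x x₁ E : ℝ) (hx1a : 1.54 ≤ x₁) (hx1b : x₁ ≤ 1.55) (hx0 : x₁ ≤ x)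
    (hE1 : 4.64 ≤ E) (hE2 : 7.684 * (x - 1.04) ≤ E) :
    0 ≤ E^3*(x-1) - E^2*(x+1) - (x - x₁ - 0.08)*(1+E)^3 := by
  have hEpos : (0:ℝ) < E := by linarith
  rcases le_or_gt (x₁ + 0.08) x with hx | hx
  · have hA : 3*E + 1 ≤ 0.72*E^2 := by nlinarith
    have hB : 4.72*x - 5.0264 ≤ 0.62*E := by nlinarith
    have h1 : (3*E+1)*(x - (x₁+0.08)) ≤ 0.72*E^2*(x - (x₁+0.08)) :=
      mul_le_mul_of_nonneg_right hA (by linarith)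
    have h2 : E^2*(4.72*x - 5.0264) ≤ E^2*(0.62*E) :=
      mul_le_mul_of_nonneg_left hB (sq_nonneg E)
    have h3 : 0 ≤ (x₁ - 1.54)*E^3 := mul_nonneg (by linarith) (by positivity)
    have h4 : 0 ≤ (x₁ - 1.54)*E^2 := mul_nonneg (by linarith) (by positivity)
    nlinarith [h1, h2, h3, h4]
  · have h1 : 0 ≤ (3*E+1)*((x₁+0.08) - x) := mul_nonneg (by linarith) (by linarith)
    have h5 : 2.85 ≤ (x₁ + 0.08 - 1)*E := by nlinarith
    have h6 : 4*x + 1 - 3*(x₁+0.08) ≤ 2.63 := by linarith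
    have h7 : E^2*(4*x + 1 - 3*(x₁+0.08)) ≤ E^2*((x₁+0.08-1)*E) :=
      mul_le_mul_of_nonneg_left (by linarith) (sq_nonneg E)
    nlinarith [h1, h7]

/-- For every x ≥ x₁, α(x) ≥ (x − x₁ − 0.08) e^{-x}, where x₁ is the unique
    positive zero of 1 + e^x − x e^x + x. -/
theorem alpha_lower_bound
    (α : ℝ → ℝ)
    (hα : ∀ x, α x = -(Real.exp x / (1 + Real.exp x) ^ 2) *
        (1 + x * (1 - Real.exp x) / (1 + Real.exp x)))
    (x₁ : ℝ) (hx₁pos : 0 < x₁)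
    (hx₁zero : 1 + Real.exp x₁ - x₁ * Real.exp x₁ + x₁ = 0)
    (hx₁uniq : ∀ y : ℝ, 0 < y → 1 + Real.exp y - y * Real.exp y + y = 0 → y = x₁) :
    ∀ x : ℝ, x₁ ≤ x → (x - x₁ - 0.08) * Real.exp (-x) ≤ α x := by
  -- Step 1 : pin down x₁ ∈ [1.54, 1.55]
  have hx₁mem : 1.54 ≤ x₁ ∧ x₁ ≤ 1.55 := by
    have h154 := exp154_ub
    have h155 := exp155_lb
    set g : ℝ → ℝ := fun y => 1 + Real.exp y - y * Real.exp y + y with hg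
    have hcont : ContinuousOn g (Set.Icc 1.54 1.55) := by fun_prop
    have hga : 0 ≤ g 1.54 := by simp only [hg]; nlinarith
    have hgb : g 1.55 ≤ 0 := by simp only [hg]; nlinarith
    have hmem : (0:ℝ) ∈ Set.Icc (g 1.55) (g 1.54) := ⟨hgb, hga⟩
    obtain ⟨y, hy, hy0⟩ :=
      intermediate_value_Icc' (by norm_num : (1.54:ℝ) ≤ 1.55) hcont hmem
    have hyx : y = x₁ := hx₁uniq y (by linarith [hy.1]) hy0
    rw [hyx] at hy
    exact ⟨hy.1, hy.2⟩
  obtain ⟨hx1a, hx1b⟩ := hx₁mem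
  -- Step 2 : the main inequality
  intro x hx
  rw [hα, Real.exp_neg]
  set E := Real.exp x with hE
  have hEpos : (0:ℝ) < E := Real.exp_pos x
  have hE1 : 4.64 ≤ E := by
    calc (4.64:ℝ) ≤ Real.exp 1.54 := exp154_lb
      _ ≤ E := Real.exp_le_exp.2 (by linarith)
  have hE2 : 7.684 * (x - 1.04) ≤ E := by
    have hsplit : E = Real.exp 2.04 * Real.exp (x - 2.04) := by
      rw [hE, ← Real.exp_add]; ring_nf
    have h1 : x - 1.04 ≤ Real.exp (x - 2.04) := by
      have := Real.add_one_le_exp (x - 2.04); linarith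
    have h2 : 0 ≤ x - 1.04 := by linarith
    calc 7.684 * (x - 1.04) ≤ Real.exp 2.04 * (x - 1.04) :=
          mul_le_mul_of_nonneg_right exp204_lb h2
      _ ≤ Real.exp 2.04 * Real.exp (x - 2.04) :=
          mul_le_mul_of_nonneg_left h1 (Real.exp_pos _).le
      _ = E := hsplit.symm
  have hkey : -(E / (1 + E) ^ 2) * (1 + x * (1 - E) / (1 + E)) - (x - x₁ - 0.08) * E⁻¹ =
      (E^3*(x-1) - E^2*(x+1) - (x - x₁ - 0.08)*(1+E)^3) / (E*(1+E)^3) := by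
    have h1 : (1:ℝ) + E ≠ 0 := by positivity
    have h2 : E ≠ 0 := ne_of_gt hEpos
    field_simp
    ring
  have hnum : 0 ≤ E^3*(x-1) - E^2*(x+1) - (x - x₁ - 0.08)*(1+E)^3 :=
    core_ineq x x₁ E hx1a hx1b hx hE1 hE2
  have hden : (0:ℝ) < E*(1+E)^3 := by positivity
  have := div_nonneg hnum hden.le
  linarith [hkey ▸ this]
end

section
/- For all x ≥ 3, α(x) - (x - x₁ - 0.08)·e^{-x} ≥ x·e^{-x}·((x₁ + 0.08 - 1)/x - 4e^{-x}), where α(x) = -(e^x/(1+e^x)²)·(1 + x·(1-e^x)/(1+e^x)) and x₁ is the unique positive zero of 1 + e^x - x·e^x + x. -/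
open Real

/-- For all x ≥ 3, α(x) − (x − x₁ − 0.08)e^{-x} ≥ x e^{-x}((x₁ + 0.08 − 1)/x − 4e^{-x}). -/
theorem alpha_minus_phi_lower_bound
    (α : ℝ → ℝ)
    (hα : ∀ x, α x = -(Real.exp x / (1 + Real.exp x) ^ 2) *
        (1 + x * (1 - Real.exp x) / (1 + Real.exp x)))
    (x₁ : ℝ) (hx₁pos : 0 < x₁)
    (hx₁zero : 1 + Real.exp x₁ - x₁ * Real.exp x₁ + x₁ = 0)
    (hx₁uniq : ∀ y : ℝ, 0 < y → 1 + Real.exp y - y * Real.exp y + y = 0 → y = x₁) :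
    ∀ x : ℝ, 3 ≤ x →
      x * Real.exp (-x) * ((x₁ + 0.08 - 1) / x - 4 * Real.exp (-x))
        ≤ α x - (x - x₁ - 0.08) * Real.exp (-x) := by
  intro x hx
  have hE : 0 < Real.exp x := exp_pos x
  have h1 : (0:ℝ) < 1 + Real.exp x := by linarith
  have hx0 : x ≠ 0 := by linarith
  rw [hα, Real.exp_neg]
  rw [← sub_nonneg]
  have hxpos : (0:ℝ) < x := by linarith
  have hEne : Real.exp x ≠ 0 := ne_of_gt hE
  have h1ne : (1 + Real.exp x) ≠ 0 := ne_of_gt h1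
  have expand : -(Real.exp x / (1 + Real.exp x) ^ 2) *
        (1 + x * (1 - Real.exp x) / (1 + Real.exp x)) - (x - x₁ - 0.08) * (Real.exp x)⁻¹
      - x * (Real.exp x)⁻¹ * ((x₁ + 0.08 - 1) / x - 4 * (Real.exp x)⁻¹)
      = (2 * Real.exp x ^ 3 + (9*x+3) * Real.exp x ^ 2 + (11*x+1) * Real.exp x + 4*x)
        / ((Real.exp x)^2 * (1 + Real.exp x)^3) := by
    field_simp
    ring
  rw [expand]
  apply div_nonneg
  · nlinarith [hE, sq_nonneg (Real.exp x)]
  · positivity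
end

section
/- For all x ≥ 0 the Gaussian Mill's ratio G(x) = Φᶜ(x)/γ(x) satisfies 2/(x + √(x²+4)) ≤ G(x) ≤ 2/(x + √(x² + 8/π)). -/
open Real MeasureTheory Set Filter Topology

/-!
Write `r_c(x) = 2 / (x + √(x² + c)) = (2/c)(√(x² + c) - x)` and `h_c = γ r_c`. Since
`h_c → 0` at infinity, `Φᶜ(a) - h_c(a) = ∫_a^∞ (γ + h_c')`, and a direct computation gives
`γ + h_c' = γ(u) / (c √(u² + c)) · N_c(u)`, where for `c ≥ 2`
`N_c(u) ≥ 0 ↔ (4 - c) u² ≤ (c - 2)²`.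

For `c = 4` the integrand is nonnegative, which is the lower bound. For `2 ≤ c < 4` it is
nonnegative up to one crossing point and nonpositive after it, so once `∫_0^∞ (γ + h_c') ≤ 0`
the integral over `(a, ∞)` is `≤ 0` for every `a ≥ 0`: past the crossing trivially, before it
because it is the integral over `(0, ∞)` minus a nonnegative piece. For `c = 8/π` the value
at `0` is exactly `0`, as `h_c(0) = 1/2 = Φᶜ(0)`.
-/

noncomputable section

def gaussDensity (x : ℝ) : ℝ := (√(2 * π))⁻¹ * exp (-x ^ 2 / 2)

lemma gaussDensity_pos (x : ℝ) : 0 < gaussDensity x := by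
  unfold gaussDensity
  have := pi_pos
  positivity

lemma hasDerivAt_gaussDensity (x : ℝ) : HasDerivAt gaussDensity (-x * gaussDensity x) x := by
  have h : HasDerivAt (fun x : ℝ => -x ^ 2 / 2) (-x) x :=
    ((hasDerivAt_pow 2 x).neg.div_const 2).congr_deriv (by push_cast; ring)
  exact (h.exp.const_mul (√(2 * π))⁻¹).congr_deriv (by rw [gaussDensity]; ring)

lemma integrable_gaussDensity : Integrable gaussDensity := by
  convert (integrable_exp_neg_mul_sq (by norm_num : (0 : ℝ) < 1 / 2)).const_mul (√(2 * π))⁻¹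
    using 3
  rw [gaussDensity]
  ring_nf

lemma tendsto_gaussDensity_atTop : Tendsto gaussDensity atTop (𝓝 0) := by
  have h : Tendsto (fun x : ℝ => x ^ 2 / 2) atTop atTop :=
    (tendsto_pow_atTop two_ne_zero).atTop_div_const two_pos
  convert (tendsto_exp_neg_atTop_nhds_zero.comp h).const_mul (√(2 * π))⁻¹ using 2 with x
  · rw [gaussDensity, Function.comp_apply, neg_div]
  · rw [mul_zero]

lemma integral_gaussDensity_Ioi_zero : ∫ u in Ioi 0, gaussDensity u = 1 / 2 := by
  have h := integral_gaussian_Ioi (1 / 2)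
  have hπ : 0 < √(2 * π) := sqrt_pos.2 (by positivity)
  simp only [gaussDensity, integral_const_mul]
  rw [show π / (1 / 2) = 2 * π by ring] at h
  rw [show (fun u : ℝ => exp (-u ^ 2 / 2)) = fun u => exp (-(1 / 2) * u ^ 2) by
    ext u; ring_nf, h]
  field_simp

section

variable {c a : ℝ}

lemma lt_sqrt_sq_add (hc : 0 < c) (x : ℝ) : x < √(x ^ 2 + c) := by
  refine (le_abs_self x).trans_lt ?_
  rw [← sqrt_sq_eq_abs]
  exact sqrt_lt_sqrt (sq_nonneg x) (by linarith)

def millsApprox (c x : ℝ) : ℝ := 2 / c * (√(x ^ 2 + c) - x)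

lemma two_div_add_sqrt_eq_millsApprox (hc : 0 < c) (x : ℝ) :
    2 / (x + √(x ^ 2 + c)) = millsApprox c x := by
  have hs := sq_sqrt (by positivity : 0 ≤ x ^ 2 + c)
  have hpos : 0 < x + √(x ^ 2 + c) := by
    have := lt_sqrt_sq_add hc (-x)
    rw [neg_sq] at this
    linarith
  unfold millsApprox
  field_simp
  linear_combination -hs

lemma millsApprox_nonneg (hc : 0 < c) (x : ℝ) : 0 ≤ millsApprox c x := by
  rw [← two_div_add_sqrt_eq_millsApprox hc]
  have := lt_sqrt_sq_add hc (-x)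
  rw [neg_sq] at this
  exact div_nonneg zero_le_two (by linarith)

lemma millsApprox_le (hc : 0 < c) {x : ℝ} (hx : 0 ≤ x) : millsApprox c x ≤ 2 / √c := by
  rw [← two_div_add_sqrt_eq_millsApprox hc]
  have : √c ≤ √(x ^ 2 + c) := sqrt_le_sqrt (by nlinarith)
  gcongr
  linarith

def tailApprox (c x : ℝ) : ℝ := gaussDensity x * millsApprox c x

def tailApproxDeriv (c x : ℝ) : ℝ :=
  gaussDensity x * (2 / c * (x / √(x ^ 2 + c) - 1) - x * millsApprox c x)

lemma hasDerivAt_tailApprox (hc : 0 < c) (x : ℝ) :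
    HasDerivAt (tailApprox c) (tailApproxDeriv c x) x := by
  have hs : HasDerivAt (fun y : ℝ => √(y ^ 2 + c)) (x / √(x ^ 2 + c)) x := by
    convert ((hasDerivAt_pow 2 x).add_const c).sqrt (by positivity) using 1
    field_simp
    ring
  have hr : HasDerivAt (millsApprox c) (2 / c * (x / √(x ^ 2 + c) - 1)) x :=
    (hs.sub (hasDerivAt_id x)).const_mul (2 / c)
  exact ((hasDerivAt_gaussDensity x).mul hr).congr_deriv (by rw [tailApproxDeriv]; ring)

lemma tailApproxDeriv_nonpos (hc : 0 < c) {x : ℝ} (hx : 0 ≤ x) : tailApproxDeriv c x ≤ 0 := by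
  have hs : x / √(x ^ 2 + c) ≤ 1 :=
    div_le_one_of_le₀ (lt_sqrt_sq_add hc x).le (sqrt_nonneg _)
  have := millsApprox_nonneg hc x
  unfold tailApproxDeriv
  refine mul_nonpos_of_nonneg_of_nonpos (gaussDensity_pos x).le ?_
  have : 0 ≤ 2 / c := by positivity
  nlinarith

lemma tendsto_tailApprox_atTop (hc : 0 < c) : Tendsto (tailApprox c) atTop (𝓝 0) := by
  have hbound : Tendsto (fun x => gaussDensity x * (2 / √c)) atTop (𝓝 0) := by
    simpa using tendsto_gaussDensity_atTop.mul_const (2 / √c)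
  refine tendsto_of_tendsto_of_tendsto_of_le_of_le' tendsto_const_nhds hbound ?_ ?_
  · exact Eventually.of_forall fun x =>
      mul_nonneg (gaussDensity_pos x).le (millsApprox_nonneg hc x)
  · filter_upwards [eventually_ge_atTop 0] with x hx
    exact mul_le_mul_of_nonneg_left (millsApprox_le hc hx) (gaussDensity_pos x).le

def millsDefect (c u : ℝ) : ℝ :=
  √(u ^ 2 + c) * (2 * u ^ 2 + c - 2) - 2 * u * (u ^ 2 + c - 1)

def millsIntegrand (c u : ℝ) : ℝ := gaussDensity u / (c * √(u ^ 2 + c)) * millsDefect c u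

lemma gaussDensity_add_tailApproxDeriv (hc : 0 < c) (u : ℝ) :
    gaussDensity u + tailApproxDeriv c u = millsIntegrand c u := by
  have hs0 : 0 < √(u ^ 2 + c) := sqrt_pos.2 (by positivity)
  have hs := sq_sqrt (by positivity : 0 ≤ u ^ 2 + c)
  rw [tailApproxDeriv, millsIntegrand, millsDefect, millsApprox]
  field_simp
  linear_combination (-2 * gaussDensity u * u) * hs

lemma integrableOn_tailApproxDeriv (hc : 0 < c) (ha : 0 ≤ a) :
    IntegrableOn (tailApproxDeriv c) (Ioi a) :=
  integrableOn_Ioi_deriv_of_nonpos' (fun x _ => hasDerivAt_tailApprox hc x)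
    (fun _ hx => tailApproxDeriv_nonpos hc (ha.trans hx.out.le)) (tendsto_tailApprox_atTop hc)

lemma integral_Ioi_tailApproxDeriv (hc : 0 < c) (ha : 0 ≤ a) :
    ∫ u in Ioi a, tailApproxDeriv c u = -tailApprox c a :=
  (integral_Ioi_of_hasDerivAt_of_nonpos' (fun x _ => hasDerivAt_tailApprox hc x)
    (fun _ hx => tailApproxDeriv_nonpos hc (ha.trans hx.out.le))
    (tendsto_tailApprox_atTop hc)).trans (zero_sub _)

lemma integrableOn_millsIntegrand (hc : 0 < c) (ha : 0 ≤ a) :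
    IntegrableOn (millsIntegrand c) (Ioi a) := by
  rw [← funext (gaussDensity_add_tailApproxDeriv hc)]
  exact integrable_gaussDensity.integrableOn.add (integrableOn_tailApproxDeriv hc ha)

lemma integral_Ioi_sub_tailApprox (hc : 0 < c) (ha : 0 ≤ a) :
    (∫ u in Ioi a, gaussDensity u) - tailApprox c a = ∫ u in Ioi a, millsIntegrand c u := by
  simp_rw [← gaussDensity_add_tailApproxDeriv hc]
  rw [integral_add integrable_gaussDensity.integrableOn (integrableOn_tailApproxDeriv hc ha),
    integral_Ioi_tailApproxDeriv hc ha, sub_eq_add_neg]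

lemma millsIntegrand_nonneg_iff (hc : 2 ≤ c) {u : ℝ} (hu : 0 ≤ u) :
    0 ≤ millsIntegrand c u ↔ (4 - c) * u ^ 2 ≤ (c - 2) ^ 2 := by
  have hs := sq_sqrt (by positivity : 0 ≤ u ^ 2 + c)
  have hs0 : 0 < √(u ^ 2 + c) := sqrt_pos.2 (by positivity)
  have hA : 0 ≤ 2 * u * (u ^ 2 + c - 1) := by nlinarith
  have hB : 0 ≤ √(u ^ 2 + c) * (2 * u ^ 2 + c - 2) := by nlinarith
  have key : (√(u ^ 2 + c) * (2 * u ^ 2 + c - 2)) ^ 2 - (2 * u * (u ^ 2 + c - 1)) ^ 2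
      = c * ((c - 2) ^ 2 - (4 - c) * u ^ 2) := by
    linear_combination (2 * u ^ 2 + c - 2) ^ 2 * hs
  rw [millsIntegrand, mul_nonneg_iff_of_pos_left
    (div_pos (gaussDensity_pos u) (by positivity)), millsDefect, sub_nonneg, ← sq_le_sq₀ hA hB,
    ← sub_nonneg, key, mul_nonneg_iff_of_pos_left (by linarith), sub_nonneg]

lemma tailApprox_le_integral_Ioi (hc : 4 ≤ c) (ha : 0 ≤ a) :
    tailApprox c a ≤ ∫ u in Ioi a, gaussDensity u := by
  have hint : 0 ≤ ∫ u in Ioi a, millsIntegrand c u :=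
    setIntegral_nonneg measurableSet_Ioi fun u hu =>
      (millsIntegrand_nonneg_iff (by linarith) (ha.trans hu.out.le)).2 (by nlinarith)
  linarith [integral_Ioi_sub_tailApprox (by linarith : 0 < c) ha]

lemma integral_Ioi_le_tailApprox (hc : 2 ≤ c)
    (h0 : ∫ u in Ioi 0, gaussDensity u ≤ tailApprox c 0) (ha : 0 ≤ a) :
    ∫ u in Ioi a, gaussDensity u ≤ tailApprox c a := by
  have hc0 : 0 < c := by linarith
  suffices ∫ u in Ioi a, millsIntegrand c u ≤ 0 by
    linarith [integral_Ioi_sub_tailApprox hc0 ha]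
  rcases le_or_gt ((4 - c) * a ^ 2) ((c - 2) ^ 2) with hsmall | hlarge
  · have hint := integrableOn_millsIntegrand hc0 le_rfl
    have hsplit : ∫ u in Ioi 0, millsIntegrand c u
        = (∫ u in Ioc 0 a, millsIntegrand c u) + ∫ u in Ioi a, millsIntegrand c u := by
      rw [← Ioc_union_Ioi_eq_Ioi ha]
      exact setIntegral_union (Ioc_disjoint_Ioi le_rfl) measurableSet_Ioi
        (hint.mono_set Ioc_subset_Ioi_self) (hint.mono_set (Ioi_subset_Ioi ha))
    have hIoc : 0 ≤ ∫ u in Ioc 0 a, millsIntegrand c u :=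
      setIntegral_nonneg measurableSet_Ioc fun u hu =>
        (millsIntegrand_nonneg_iff hc hu.1.le).2 (by nlinarith [hu.1, hu.2])
    linarith [integral_Ioi_sub_tailApprox hc0 le_rfl]
  · refine setIntegral_nonpos measurableSet_Ioi fun u hu => ?_
    have hua : a ≤ u := hu.out.le
    have hu : 0 ≤ u := ha.trans hua
    refine le_of_lt (not_le.1 fun h => ?_)
    have := (millsIntegrand_nonneg_iff hc hu).1 h
    nlinarith [sq_nonneg (c - 2)]

end

lemma tailApprox_eight_div_pi_zero : tailApprox (8 / π) 0 = 1 / 2 := by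
  have hπ := pi_pos
  have h16 : √(8 / π) * √(2 * π) = 4 := by
    rw [← sqrt_mul (by positivity), show 8 / π * (2 * π) = 4 ^ 2 by field_simp; ring,
      sqrt_sq zero_le_four]
  rw [tailApprox, gaussDensity, ← two_div_add_sqrt_eq_millsApprox (by positivity)]
  simp only [zero_pow two_ne_zero, neg_zero, zero_div, exp_zero, mul_one, zero_add]
  rw [← div_eq_inv_mul, div_div, h16]
  norm_num

lemma two_le_eight_div_pi : 2 ≤ 8 / π := by
  rw [le_div_iff₀ pi_pos]
  linarith [pi_le_four]

/-- Bounds on the Gaussian Mill's ratio: for x ≥ 0,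
    2/(x + √(x²+4)) ≤ G(x) ≤ 2/(x + √(x² + 8/π)). -/
theorem mills_ratio_bounds
    (γ Φc G : ℝ → ℝ)
    (hγ : ∀ x, γ x = (Real.sqrt (2 * Real.pi))⁻¹ * Real.exp (-x ^ 2 / 2))
    (hΦc : ∀ x, Φc x = ∫ u in Set.Ioi x, γ u)
    (hG : ∀ x, G x = Φc x / γ x) :
    ∀ x : ℝ, 0 ≤ x →
      2 / (x + Real.sqrt (x ^ 2 + 4)) ≤ G x ∧
      G x ≤ 2 / (x + Real.sqrt (x ^ 2 + 8 / Real.pi)) := by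
  obtain rfl : γ = gaussDensity := funext hγ
  intro x hx
  have hG' : G x = (∫ u in Ioi x, gaussDensity u) / gaussDensity x := by rw [hG, hΦc]
  rw [hG', le_div_iff₀ (gaussDensity_pos x), div_le_iff₀ (gaussDensity_pos x),
    two_div_add_sqrt_eq_millsApprox four_pos,
    two_div_add_sqrt_eq_millsApprox (by positivity), mul_comm _ (gaussDensity x),
    mul_comm _ (gaussDensity x)]
  refine ⟨tailApprox_le_integral_Ioi le_rfl hx,
    integral_Ioi_le_tailApprox two_le_eight_div_pi ?_ hx⟩
  rw [integral_gaussDensity_Ioi_zero, tailApprox_eight_div_pi_zero]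
end
end

section
/- The Gaussian Mill's ratio G(x) = Φᶜ(x)/γ(x) is strictly decreasing on all of ℝ. -/
/-!
Writing `φ` for the standard normal density, `φ' = -u φ`, so `∫ₓ^∞ u φ(u) du = φ(x)` and
`φ(x) - x Φᶜ(x) = ∫ₓ^∞ (u - x) φ(u) du > 0`. Since `(Φᶜ)' = -φ`, the quotient rule gives
`G' = x G - 1 = (x Φᶜ - φ) / φ < 0`.
-/

open Real MeasureTheory ProbabilityTheory Set Filter Topology
open scoped NNReal

lemma hasDerivAt_gaussianPDFReal (μ : ℝ) (v : ℝ≥0) (x : ℝ) :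
    HasDerivAt (gaussianPDFReal μ v) (-((x - μ) / v) * gaussianPDFReal μ v x) x := by
  have hexp := ((((hasDerivAt_id' x).sub_const μ).fun_pow 2).fun_neg.div_const
    (2 * (v : ℝ))).exp.const_mul (√(2 * π * v))⁻¹
  rw [gaussianPDFReal_def]
  refine hexp.congr_deriv ?_
  push_cast
  ring

lemma hasDerivAt_integral_Ioi {f : ℝ → ℝ} {x : ℝ} (hf : Integrable f) (hx : ContinuousAt f x) :
    HasDerivAt (fun y => ∫ u in Ioi y, f u) (-f x) x := by
  have hsplit : (fun y => ∫ u in Ioi y, f u) = fun y => (∫ u in y..0, f u) + ∫ u in Ioi 0, f u :=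
    funext fun y => (intervalIntegral.integral_interval_add_Ioi hf.integrableOn hf.integrableOn).symm
  rw [hsplit]
  exact (intervalIntegral.integral_hasDerivAt_left hf.intervalIntegrable
    hf.aestronglyMeasurable.stronglyMeasurableAtFilter hx).add_const _

local notation "φ" => gaussianPDFReal 0 1

lemma hasDerivAt_gaussianPDFReal_zero_one (x : ℝ) : HasDerivAt φ (-(x * φ x)) x := by
  simpa using hasDerivAt_gaussianPDFReal 0 1 x

lemma integrable_mul_gaussianPDFReal_zero_one : Integrable fun u => u * φ u := by
  refine ((integrable_mul_exp_neg_mul_sq (b := 1 / 2) (by norm_num)).const_mul (√(2 * π))⁻¹).congr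
    (.of_forall fun u => ?_)
  simp only [gaussianPDFReal, NNReal.coe_one, mul_one, sub_zero]
  ring_nf

-- `φ` and `φ'` are integrable, so `φ` vanishes at infinity.
lemma tendsto_gaussianPDFReal_zero_one_atTop : Tendsto φ atTop (𝓝 0) :=
  tendsto_zero_of_hasDerivAt_of_integrableOn_Ioi (a := 0)
    (fun x _ => hasDerivAt_gaussianPDFReal_zero_one x)
    integrable_mul_gaussianPDFReal_zero_one.neg.integrableOn
    (integrable_gaussianPDFReal 0 1).integrableOn

lemma integral_Ioi_mul_gaussianPDFReal_zero_one (x : ℝ) : ∫ u in Ioi x, u * φ u = φ x := by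
  have hftc := integral_Ioi_of_hasDerivAt_of_tendsto' (a := x)
    (fun u _ => hasDerivAt_gaussianPDFReal_zero_one u)
    integrable_mul_gaussianPDFReal_zero_one.neg.integrableOn
    tendsto_gaussianPDFReal_zero_one_atTop
  rw [integral_neg] at hftc
  linarith

lemma mul_integral_Ioi_gaussianPDFReal_zero_one_lt (x : ℝ) : x * ∫ u in Ioi x, φ u < φ x := by
  have hint : Integrable fun u => (u - x) * φ u := by
    simp_rw [sub_mul]
    exact integrable_mul_gaussianPDFReal_zero_one.sub ((integrable_gaussianPDFReal 0 1).const_mul x)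
  have hpos : 0 < ∫ u in Ioi x, (u - x) * φ u := by
    have hnonneg : 0 ≤ᵐ[volume.restrict (Ioi x)] fun u => (u - x) * φ u := by
      filter_upwards [ae_restrict_mem measurableSet_Ioi] with u hu
      exact mul_nonneg (sub_nonneg.2 (le_of_lt hu)) (gaussianPDFReal_nonneg 0 1 u)
    rw [setIntegral_pos_iff_support_of_nonneg_ae hnonneg hint.integrableOn]
    refine (Measure.measure_Ioi_pos _ x).trans_le (measure_mono fun u hu => ⟨?_, hu⟩)
    exact mul_ne_zero (sub_ne_zero.2 (ne_of_gt hu)) (gaussianPDFReal_pos 0 1 u one_ne_zero).ne'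
  have hsplit : ∫ u in Ioi x, (u - x) * φ u = φ x - x * ∫ u in Ioi x, φ u := by
    simp_rw [sub_mul]
    rw [integral_sub integrable_mul_gaussianPDFReal_zero_one.integrableOn
      ((integrable_gaussianPDFReal 0 1).const_mul x).integrableOn, integral_const_mul,
      integral_Ioi_mul_gaussianPDFReal_zero_one]
  linarith

noncomputable def millsRatio (x : ℝ) : ℝ := (∫ u in Ioi x, φ u) / φ x

lemma hasDerivAt_millsRatio (x : ℝ) : HasDerivAt millsRatio (x * millsRatio x - 1) x := by
  have hφ := (gaussianPDFReal_pos 0 1 x one_ne_zero).ne'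
  refine ((hasDerivAt_integral_Ioi (integrable_gaussianPDFReal 0 1)
    (hasDerivAt_gaussianPDFReal_zero_one x).continuousAt).div
    (hasDerivAt_gaussianPDFReal_zero_one x) hφ).congr_deriv ?_
  rw [millsRatio]
  field_simp
  ring

lemma mul_millsRatio_lt_one (x : ℝ) : x * millsRatio x < 1 := by
  rw [millsRatio, mul_div_assoc', div_lt_one (gaussianPDFReal_pos 0 1 x one_ne_zero)]
  exact mul_integral_Ioi_gaussianPDFReal_zero_one_lt x

lemma strictAnti_millsRatio : StrictAnti millsRatio :=
  strictAnti_of_hasDerivAt_neg hasDerivAt_millsRatio fun x => sub_neg.2 (mul_millsRatio_lt_one x)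

/-- The Gaussian Mill's ratio G = Φᶜ/γ is strictly decreasing on ℝ. -/
theorem mills_ratio_strictAnti
    (γ Φc G : ℝ → ℝ)
    (hγ : ∀ x, γ x = (Real.sqrt (2 * Real.pi))⁻¹ * Real.exp (-x ^ 2 / 2))
    (hΦc : ∀ x, Φc x = ∫ u in Set.Ioi x, γ u)
    (hG : ∀ x, G x = Φc x / γ x) :
    StrictAnti G := by
  have hγφ : γ = φ := funext fun x => by simp [hγ, gaussianPDFReal]
  have hGφ : G = millsRatio := funext fun x => by rw [hG, hΦc, hγφ, millsRatio]
  exact hGφ ▸ strictAnti_millsRatio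
end
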